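/- Let ω be the permutation of maximal length of S_n. Then Y_ω^{[1,2,…,n]} = Σ_{w ∈ S_n} (−q)^{ℓ(ω)−ℓ(w)} T_w and Y_ω^{[n,n−1,…,1]} = Σ_{w ∈ S_n} q^{ℓ(w)−ℓ(ω)} T_w. -/

import Mathlib

open scoped BigOperators
open Finset

namespace HeckePaper

noncomputable section

/-- The Coxeter length of a permutation of `Fin n`, i.e. its number of inversions. -/
def len {n : ℕ} (w : Equiv.Perm (Fin n)) : ℕ :=
  (Finset.univ.filter fun p : Fin n × Fin n => p.1 < p.2 ∧ w p.2 < w p.1).card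

/-- The adjacent transposition exchanging `i` and `i+1` (`0`-based), i.e. the
Coxeter generator `s_{i+1} = T_{i+1}` in the (1-based) notation of the paper;
defined to be `1` when out of range. -/
def adj (n i : ℕ) : Equiv.Perm (Fin n) :=
  if h : i + 1 < n then Equiv.swap ⟨i, by omega⟩ ⟨i + 1, h⟩ else 1

/-- The q-integer `[k] = (q^k - q^{-k})/(q - q⁻¹) = q^{k-1} + q^{k-3} + ⋯ + q^{1-k}`. -/
def qint {R : Type} [CommRing R] (q : Rˣ) (k : ℤ) : R :=
  if 0 ≤ k then ∑ j ∈ Finset.range k.toNat, ((q ^ (k - 1 - 2 * (j : ℤ)) : Rˣ) : R)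
  else - ∑ j ∈ Finset.range (-k).toNat, ((q ^ (-k - 1 - 2 * (j : ℤ)) : Rˣ) : R)

/-- `Q = q - q⁻¹`. -/
def Qv (R : Type) [CommRing R] (q : Rˣ) : R := (q : R) - ((q⁻¹ : Rˣ) : R)

/-- A realization of the Hecke algebra `H_n` of the symmetric group `S_n` over `R`:
an `R`-algebra `H` with a basis `{T_w : w ∈ S_n}` such that `T_u T_v = T_{uv}`
whenever lengths add, and the Hecke quadratic relations
`T_i² = (q - q⁻¹) T_i + 1` hold for the generators. -/
structure HeckeAlgebra (n : ℕ) (R : Type) [CommRing R] (q : Rˣ) (H : Type)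
    [Ring H] [Algebra R H] where
  T : Equiv.Perm (Fin n) → H
  basis : Module.Basis (Equiv.Perm (Fin n)) R H
  basis_eq : ∀ w, basis w = T w
  T_one : T 1 = 1
  T_mul : ∀ u v : Equiv.Perm (Fin n), len (u * v) = len u + len v →
    T u * T v = T (u * v)
  T_sq : ∀ i : ℕ, i + 1 < n →
    T (adj n i) * T (adj n i) = Qv R q • T (adj n i) + 1

/-- The Young subgroup `S_I` of `S_n` associated with a composition `I` of `n`:
permutations preserving each block of the composition. -/
def youngSubgroup {n : ℕ} (c : Composition n) : Subgroup (Equiv.Perm (Fin n)) where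
  carrier := {w | ∀ i, c.index (w i) = c.index i}
  one_mem' := fun _ => rfl
  mul_mem' := by
    intro a b ha hb i
    have hb' := hb i
    have ha' := ha (b i)
    simpa [Equiv.Perm.mul_apply, hb'] using ha'
  inv_mem' := by
    intro a ha i
    have := ha (a⁻¹ i)
    simpa using this.symm

/-- `w` is the minimal-length representative of its coset `w·S_I`. -/
def IsMinCosetRep {n : ℕ} (c : Composition n) (w : Equiv.Perm (Fin n)) : Prop :=
  ∀ u ∈ youngSubgroup c, len w ≤ len (w * u)

/-- `w` is of maximal length in its coset `w·S_I`. -/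
def IsMaxCosetRep {n : ℕ} (c : Composition n) (w : Equiv.Perm (Fin n)) : Prop :=
  ∀ u ∈ youngSubgroup c, len (w * u) ≤ len w

/-- The set of minimal-length representatives of the cosets `S_n/S_I`. -/
def minCosetReps {n : ℕ} (c : Composition n) : Finset (Equiv.Perm (Fin n)) :=
  @Finset.filter _ (IsMinCosetRep c) (Classical.decPred _) Finset.univ

/-- The word `[a+m-2, …, a+1, a]` (so that the corresponding product of adjacent
transpositions is the block cyclic permutation `ζ_m` shifted by `a`). -/
def zetaWordBlock (a m : ℕ) : List ℕ := (List.range (m - 1)).reverse.map (a + ·)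

/-- The reduced word of the permutation `w_J` (whose Hecke element is `ζ_J`),
for a composition `J` of `n`. -/
def zetaWord {n : ℕ} (c : Composition n) : List ℕ :=
  (List.ofFn fun k : Fin c.length =>
    zetaWordBlock (c.sizeUpTo k) (c.blocksFun k)).flatten

/-- The permutation `w_J`, a minimal-length representative of the conjugacy
class corresponding to the composition `J`; `ζ_J = T_{w_J}`. -/
def zetaPerm {n : ℕ} (c : Composition n) : Equiv.Perm (Fin n) :=
  ((zetaWord c).map (adj n)).prod

/-- The composition of `n` obtained by sorting the parts of a partition of `n`
in decreasing order. -/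
def partComp {n : ℕ} (μ : n.Partition) : Composition n where
  blocks := μ.parts.sort (· ≥ ·)
  blocks_pos := by
    intro i hi
    exact μ.parts_pos (by rwa [Multiset.mem_sort] at hi)
  blocks_sum := by
    have h : ((μ.parts.sort (· ≥ ·) : List ℕ) : Multiset ℕ) = μ.parts :=
      Multiset.sort_eq _ _
    calc (μ.parts.sort (· ≥ ·)).sum
        = ((μ.parts.sort (· ≥ ·) : List ℕ) : Multiset ℕ).sum := by
          rw [Multiset.sum_coe]
      _ = μ.parts.sum := by rw [h]
      _ = n := μ.parts_sum

/-- `m` is a partial sum `j_1 + ⋯ + j_k` of the composition `J`. -/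
def IsPartialSum {n : ℕ} (c : Composition n) (m : ℕ) : Prop :=
  ∃ k ≤ c.length, c.sizeUpTo k = m

/-- `w` has a recoil at `a` (0-based; i.e. at `i = a+1` in the 1-based notation of
the paper): the value `a+1` occurs to the left of the value `a` in the one-line
word of `w`. -/
def Recoil {n : ℕ} (w : Equiv.Perm (Fin n)) (a : ℕ) : Prop :=
  ∀ h : a + 1 < n, w⁻¹ ⟨a + 1, h⟩ < w⁻¹ ⟨a, by omega⟩

namespace HeckeAlgebra

variable {n : ℕ} {R : Type} [CommRing R] {q : Rˣ} {H : Type} [Ring H] [Algebra R H]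
variable (𝒜 : HeckeAlgebra n R q H)

/-- The scalar product on `H_n` for which the basis `{T_w}` is orthonormal. -/
def scalar (x y : H) : R :=
  ∑ w : Equiv.Perm (Fin n), 𝒜.basis.repr x w * 𝒜.basis.repr y w

/-- The normalization map `N_I : H(S_I) → H_n`,
`h ↦ Σ_w T_w h T_{w⁻¹}` (sum over the minimal-length coset representatives of
`S_n/S_I`). -/
def norm (c : Composition n) (h : H) : H :=
  ∑ w ∈ minCosetReps c, 𝒜.T w * h * 𝒜.T w⁻¹

/-- The product `T_{a_1} T_{a_2} ⋯` in the Hecke algebra associated with a word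
(list of 0-based indices of the generators). -/
def wordT (l : List ℕ) : H := (l.map fun a => 𝒜.T (adj n a)).prod

/-- The Hecke element `ζ_J = T_{w_J}` of a composition `J`. -/
def zeta (c : Composition n) : H := 𝒜.T (zetaPerm c)

end HeckeAlgebra


/-- The family `{Y_w}` is the Yang–Baxter family associated with the spectral
vector `v`: `Y_1 = 1` and `Y_{w·sᵢ} = Y_w · (T_i − q^k/[k])` whenever
`ℓ(w·sᵢ) = ℓ(w) + 1`, where `k = v_{w(i+1)} − v_{w(i)}`. -/
def IsYangBaxterFamily {n : ℕ} {R : Type} [CommRing R] {q : Rˣ} {H : Type}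
    [Ring H] [Algebra R H] (𝒜 : HeckeAlgebra n R q H)
    (v : Fin n → ℤ) (inv : ℤ → R) (Y : Equiv.Perm (Fin n) → H) : Prop :=
  Y 1 = 1 ∧
  ∀ (w : Equiv.Perm (Fin n)) (i : ℕ) (h : i + 1 < n),
    len (w * adj n i) = len w + 1 →
    Y (w * adj n i) = Y w * (𝒜.T (adj n i) -
      algebraMap R H
        (((q ^ (v (w ⟨i + 1, h⟩) - v (w ⟨i, by omega⟩)) : Rˣ) : R) *
          inv (v (w ⟨i + 1, h⟩) - v (w ⟨i, by omega⟩))))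

/-!
At `ω = Fin.revPerm` every `sᵢ` is a descent, so the recursion gives `Y_ω = Y_{ωsᵢ} (Tᵢ - a)`
with `a = q^k/[k]` independent of `i` (`k = 1`, resp. `k = -1`). As `(Tᵢ - a)(Tᵢ - b) = 0` for the
other root `b` of `X² - QX - 1`, we get `Y_ω (Tᵢ - b) = 0` for all `i`. In the basis `T_w` this
says that the coefficient of `T_{usᵢ}` is `-a` times that of `T_u` whenever `ℓ(usᵢ) < ℓ(u)`.
Since `Y_ω = T_ω + (lower terms)`, the coefficient of `T_w` is `(-a)^{ℓ(ω)-ℓ(w)}`.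
-/

section Permutations

variable {n : ℕ}

lemma adj_of_lt {i : ℕ} (h : i + 1 < n) :
    adj n i = Equiv.swap ⟨i, by omega⟩ ⟨i + 1, h⟩ :=
  dif_pos h

lemma adj_mul_self (i : ℕ) : adj n i * adj n i = 1 := by
  unfold adj
  split_ifs <;> simp

@[simp]
lemma mul_adj_mul_adj (w : Equiv.Perm (Fin n)) (i : ℕ) : w * adj n i * adj n i = w := by
  rw [mul_assoc, adj_mul_self, mul_one]

lemma adj_apply_left {i : ℕ} (h : i + 1 < n) : adj n i ⟨i, by omega⟩ = ⟨i + 1, h⟩ := by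
  simp [adj_of_lt h]

lemma adj_apply_right {i : ℕ} (h : i + 1 < n) : adj n i ⟨i + 1, h⟩ = ⟨i, by omega⟩ := by
  simp [adj_of_lt h]

lemma mul_adj_eq_iff {v w : Equiv.Perm (Fin n)} {i : ℕ} : v * adj n i = w ↔ v = w * adj n i :=
  ⟨fun hv => by rw [← hv, mul_adj_mul_adj], fun hv => by rw [hv, mul_adj_mul_adj]⟩

lemma mul_adj_ne_self (w : Equiv.Perm (Fin n)) {i : ℕ} (h : i + 1 < n) : w * adj n i ≠ w := by
  intro hw
  have hi := DFunLike.congr_fun (mul_eq_left.mp hw) ⟨i, by omega⟩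
  simp [adj_apply_left h] at hi

lemma strictMono_of_forall_lt_adjacent {α : Type*} [Preorder α] {f : Fin n → α}
    (hf : ∀ (i : ℕ) (h : i + 1 < n), f ⟨i, by omega⟩ < f ⟨i + 1, h⟩) : StrictMono f := by
  cases n with
  | zero => exact fun a => a.elim0
  | succ m => exact Fin.strictMono_iff_lt_succ.mpr fun i => hf i (by omega)

lemma strictAnti_of_forall_adjacent_lt {α : Type*} [Preorder α] {f : Fin n → α}
    (hf : ∀ (i : ℕ) (h : i + 1 < n), f ⟨i + 1, h⟩ < f ⟨i, by omega⟩) : StrictAnti f := by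
  cases n with
  | zero => exact fun a => a.elim0
  | succ m => exact Fin.strictAnti_iff_succ_lt.mpr fun i => hf i (by omega)

lemma exists_adjacent_lt_of_ne_one {w : Equiv.Perm (Fin n)} (hw : w ≠ 1) :
    ∃ (i : ℕ) (h : i + 1 < n), w ⟨i + 1, h⟩ < w ⟨i, by omega⟩ := by
  by_contra! hasc
  refine hw (Equiv.ext fun x => (strictMono_of_forall_lt_adjacent fun i h => ?_).apply_eq)
  exact (hasc i h).lt_of_ne (w.injective.ne (by simp [Fin.ext_iff]))

lemma exists_lt_adjacent_of_ne_revPerm {w : Equiv.Perm (Fin n)} (hw : w ≠ Fin.revPerm) :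
    ∃ (i : ℕ) (h : i + 1 < n), w ⟨i, by omega⟩ < w ⟨i + 1, h⟩ := by
  by_contra! hdesc
  have hanti := strictAnti_of_forall_adjacent_lt fun i h =>
    (hdesc i h).lt_of_ne (w.injective.ne (by simp [Fin.ext_iff]))
  refine hw (Equiv.ext fun x => ?_)
  have hx : (w x).rev = x := congrFun (Fin.rev_strictAnti.comp hanti).eq_id x
  simpa using congrArg Fin.rev hx

lemma len_one : len (1 : Equiv.Perm (Fin n)) = 0 := by
  simp only [len, Equiv.Perm.one_apply]
  exact card_eq_zero.mpr (filter_eq_empty_iff.mpr fun p _ hp => lt_asymm hp.1 hp.2)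

lemma swap_lt_swap_iff {a b x y : Fin n} (hab : (b : ℕ) = a + 1)
    (hx : ¬(x = a ∧ y = b)) (hy : ¬(x = b ∧ y = a)) :
    Equiv.swap a b x < Equiv.swap a b y ↔ x < y := by
  simp only [Equiv.swap_apply_def]
  split_ifs <;> simp only [Fin.ext_iff, Fin.lt_def, not_and] at * <;> omega

lemma len_mul_swap_of_lt {w : Equiv.Perm (Fin n)} {a b : Fin n} (hab : (b : ℕ) = a + 1)
    (hw : w a < w b) : len (w * Equiv.swap a b) = len w + 1 := by
  classical
  let φ := Equiv.prodCongr (Equiv.swap a b) (Equiv.swap a b)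
  have hlt : a < b := by simp [Fin.lt_def, hab]
  -- `φ` maps the inversions of `w` bijectively onto those of `w * swap a b` other than `(a, b)`.
  have key : univ.filter (fun p : Fin n × Fin n =>
        p.1 < p.2 ∧ (w * Equiv.swap a b) p.2 < (w * Equiv.swap a b) p.1) =
      insert (a, b) ((univ.filter fun p : Fin n × Fin n => p.1 < p.2 ∧ w p.2 < w p.1).map
        φ.toEmbedding) := by
    ext ⟨x, y⟩
    simp only [mem_insert, mem_map_equiv, mem_filter, mem_univ, true_and]
    simp only [Prod.mk.injEq, φ, Equiv.prodCongr_symm, Equiv.symm_swap, Equiv.prodCongr_apply,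
      Prod.map, Equiv.Perm.mul_apply]
    by_cases hxy : x = a ∧ y = b
    · obtain ⟨rfl, rfl⟩ := hxy
      simpa [hlt] using hw
    by_cases hyx : x = b ∧ y = a
    · obtain ⟨rfl, rfl⟩ := hyx
      simpa [hlt, hlt.ne, hlt.not_gt] using hw.le
    rw [swap_lt_swap_iff hab hxy hyx]
    simp [hxy]
  have hnotMem : (a, b) ∉ (univ.filter fun p : Fin n × Fin n => p.1 < p.2 ∧ w p.2 < w p.1).map
      φ.toEmbedding := by
    simp [φ, mem_map_equiv, hlt.not_gt]
  rw [len, len, key, card_insert_of_notMem hnotMem, card_map]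

lemma len_mul_adj_of_lt {w : Equiv.Perm (Fin n)} {i : ℕ} (h : i + 1 < n)
    (hw : w ⟨i, by omega⟩ < w ⟨i + 1, h⟩) : len (w * adj n i) = len w + 1 := by
  rw [adj_of_lt h]
  exact len_mul_swap_of_lt rfl hw

lemma len_mul_adj_of_gt {w : Equiv.Perm (Fin n)} {i : ℕ} (h : i + 1 < n)
    (hw : w ⟨i + 1, h⟩ < w ⟨i, by omega⟩) : len (w * adj n i) + 1 = len w := by
  simpa using (len_mul_adj_of_lt (w := w * adj n i) h
    (by simpa [adj_apply_left h, adj_apply_right h] using hw)).symm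

lemma len_le_len_mul_adj_add_one (w : Equiv.Perm (Fin n)) {i : ℕ} (h : i + 1 < n) :
    len w ≤ len (w * adj n i) + 1 := by
  have hne : w ⟨i, by omega⟩ ≠ w ⟨i + 1, h⟩ := w.injective.ne (by simp [Fin.ext_iff])
  rcases hne.lt_or_gt with hw | hw
  · rw [len_mul_adj_of_lt h hw]
    omega
  · exact (len_mul_adj_of_gt h hw).ge

lemma len_adj {i : ℕ} (h : i + 1 < n) : len (adj n i) = 1 := by
  simpa [len_one] using len_mul_adj_of_lt (w := 1) h (by simp [Fin.lt_def])

lemma len_le_len_revPerm (w : Equiv.Perm (Fin n)) :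
    len w ≤ len (Fin.revPerm : Equiv.Perm (Fin n)) :=
  card_le_card fun p => by
    simp only [mem_filter, mem_univ, true_and, Fin.revPerm_apply, Fin.rev_lt_rev]
    exact fun hp => ⟨hp.1, hp.1⟩

lemma revPerm_adjacent_lt {i : ℕ} (h : i + 1 < n) :
    (Fin.revPerm : Equiv.Perm (Fin n)) ⟨i + 1, h⟩ < Fin.revPerm ⟨i, by omega⟩ := by
  simp only [Fin.revPerm_apply, Fin.rev_lt_rev, Fin.mk_lt_mk]
  omega

theorem apply_eq_pow_mul_apply_revPerm {M : Type*} [Monoid M] {r : Equiv.Perm (Fin n) → M}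
    {e : M} (hr : ∀ (u : Equiv.Perm (Fin n)) (i : ℕ) (h : i + 1 < n),
      u ⟨i + 1, h⟩ < u ⟨i, by omega⟩ → r (u * adj n i) = e * r u)
    (w : Equiv.Perm (Fin n)) :
    r w = e ^ (len (Fin.revPerm : Equiv.Perm (Fin n)) - len w) * r Fin.revPerm := by
  by_cases hw : w = Fin.revPerm
  · simp [hw]
  obtain ⟨i, h, hasc⟩ := exists_lt_adjacent_of_ne_revPerm hw
  have hlen := len_mul_adj_of_lt h hasc
  have hle := len_le_len_revPerm (w * adj n i)
  have hstep := hr (w * adj n i) i h (by simpa [adj_apply_left h, adj_apply_right h] using hasc)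
  rw [mul_adj_mul_adj] at hstep
  rw [hstep, apply_eq_pow_mul_apply_revPerm hr (w * adj n i), ← mul_assoc, ← pow_succ']
  congr 2
  omega
termination_by len (Fin.revPerm : Equiv.Perm (Fin n)) - len w

end Permutations

namespace HeckeAlgebra

variable {n : ℕ} {R : Type} [CommRing R] {q : Rˣ} {H : Type} [Ring H] [Algebra R H]
variable (𝒜 : HeckeAlgebra n R q H)

lemma T_mul_T_adj_of_lt {u : Equiv.Perm (Fin n)} {i : ℕ} (h : i + 1 < n)
    (hu : u ⟨i, by omega⟩ < u ⟨i + 1, h⟩) : 𝒜.T u * 𝒜.T (adj n i) = 𝒜.T (u * adj n i) :=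
  𝒜.T_mul _ _ (by rw [len_mul_adj_of_lt h hu, len_adj h])

lemma T_mul_T_adj_of_gt {u : Equiv.Perm (Fin n)} {i : ℕ} (h : i + 1 < n)
    (hu : u ⟨i + 1, h⟩ < u ⟨i, by omega⟩) :
    𝒜.T u * 𝒜.T (adj n i) = 𝒜.T (u * adj n i) + Qv R q • 𝒜.T u := by
  have hTu : 𝒜.T (u * adj n i) * 𝒜.T (adj n i) = 𝒜.T u := by
    simpa using 𝒜.T_mul_T_adj_of_lt (u := u * adj n i) h
      (by simpa [adj_apply_left h, adj_apply_right h] using hu)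
  calc 𝒜.T u * 𝒜.T (adj n i)
      = 𝒜.T (u * adj n i) * (𝒜.T (adj n i) * 𝒜.T (adj n i)) := by rw [← mul_assoc, hTu]
    _ = 𝒜.T (u * adj n i) + Qv R q • 𝒜.T u := by
      rw [𝒜.T_sq i h, mul_add, mul_one, mul_smul_comm, hTu, add_comm]

lemma repr_T (w : Equiv.Perm (Fin n)) : 𝒜.basis.repr (𝒜.T w) = Finsupp.single w 1 := by
  rw [← 𝒜.basis_eq, Module.Basis.repr_self]

lemma repr_mul_T_adj (x : H) (u : Equiv.Perm (Fin n)) {i : ℕ} (h : i + 1 < n) :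
    𝒜.basis.repr (x * 𝒜.T (adj n i)) u =
      𝒜.basis.repr x (u * adj n i) +
        (if u ⟨i + 1, h⟩ < u ⟨i, by omega⟩ then Qv R q else 0) * 𝒜.basis.repr x u := by
  have key : Finsupp.lapply u ∘ₗ 𝒜.basis.repr.toLinearMap ∘ₗ
        LinearMap.mulRight R (𝒜.T (adj n i)) =
      Finsupp.lapply (u * adj n i) ∘ₗ 𝒜.basis.repr.toLinearMap +
        (if u ⟨i + 1, h⟩ < u ⟨i, by omega⟩ then Qv R q else 0) •
          (Finsupp.lapply u ∘ₗ 𝒜.basis.repr.toLinearMap) := by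
    refine 𝒜.basis.ext fun v => ?_
    simp only [LinearMap.comp_apply, LinearMap.mulRight_apply, LinearMap.add_apply,
      LinearMap.smul_apply, Finsupp.lapply_apply, LinearEquiv.coe_toLinearMap, smul_eq_mul,
      𝒜.basis_eq, repr_T]
    have hne : v ⟨i, by omega⟩ ≠ v ⟨i + 1, h⟩ := v.injective.ne (by simp [Fin.ext_iff])
    rcases hne.lt_or_gt with hv | hv
    · rw [𝒜.T_mul_T_adj_of_lt h hv, repr_T]
      by_cases hvu : v = u
      · subst hvu
        simp [mul_adj_ne_self v h, hv.not_gt]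
      · simp [Finsupp.single_apply, hvu, mul_adj_eq_iff]
    · rw [𝒜.T_mul_T_adj_of_gt h hv, map_add, map_smul, repr_T, repr_T]
      by_cases hvu : v = u
      · subst hvu
        simp [mul_adj_ne_self v h, hv]
      · simp [Finsupp.single_apply, hvu, mul_adj_eq_iff]
  simpa only [LinearMap.comp_apply, LinearMap.mulRight_apply, LinearMap.add_apply,
    LinearMap.smul_apply, Finsupp.lapply_apply, LinearEquiv.coe_toLinearMap, smul_eq_mul]
    using LinearMap.congr_fun key x

lemma repr_mul_T_adj_sub_algebraMap (x : H) (c : R) (u : Equiv.Perm (Fin n)) {i : ℕ}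
    (h : i + 1 < n) :
    𝒜.basis.repr (x * (𝒜.T (adj n i) - algebraMap R H c)) u =
      𝒜.basis.repr x (u * adj n i) +
        (if u ⟨i + 1, h⟩ < u ⟨i, by omega⟩ then Qv R q else 0) * 𝒜.basis.repr x u -
          c * 𝒜.basis.repr x u := by
  rw [mul_sub, ← Algebra.commutes, ← Algebra.smul_def, map_sub, Finsupp.sub_apply,
    𝒜.repr_mul_T_adj x u h, map_smul, Finsupp.smul_apply, smul_eq_mul]

lemma T_adj_sub_mul_T_adj_sub {a b : R} (hab : a + b = Qv R q) (hab' : a * b = -1) {i : ℕ}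
    (h : i + 1 < n) :
    (𝒜.T (adj n i) - algebraMap R H a) * (𝒜.T (adj n i) - algebraMap R H b) = 0 := by
  have hsq := 𝒜.T_sq i h
  rw [← hab, Algebra.smul_def, map_add] at hsq
  have hmul : algebraMap R H a * algebraMap R H b = -1 := by
    rw [← map_mul, hab', map_neg, map_one]
  calc (𝒜.T (adj n i) - algebraMap R H a) * (𝒜.T (adj n i) - algebraMap R H b)
      = 𝒜.T (adj n i) * 𝒜.T (adj n i) - 𝒜.T (adj n i) * algebraMap R H b -
          algebraMap R H a * 𝒜.T (adj n i) + algebraMap R H a * algebraMap R H b := by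
        noncomm_ring
    _ = 0 := by
        rw [hsq, ← Algebra.commutes, hmul]
        noncomm_ring

lemma repr_mul_adj_of_mul_sub_eq_zero {x : H} {a b : R} (hab : a + b = Qv R q) {i : ℕ}
    (h : i + 1 < n) (hx : x * (𝒜.T (adj n i) - algebraMap R H b) = 0)
    {u : Equiv.Perm (Fin n)} (hu : u ⟨i + 1, h⟩ < u ⟨i, by omega⟩) :
    𝒜.basis.repr x (u * adj n i) = -a * 𝒜.basis.repr x u := by
  have h0 := 𝒜.repr_mul_T_adj_sub_algebraMap x b u h
  rw [hx, map_zero, Finsupp.coe_zero, Pi.zero_apply, if_pos hu, ← hab] at h0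
  linear_combination -h0

end HeckeAlgebra

namespace IsYangBaxterFamily

variable {n : ℕ} {R : Type} [CommRing R] {q : Rˣ} {H : Type} [Ring H] [Algebra R H]
variable {𝒜 : HeckeAlgebra n R q H} {v : Fin n → ℤ} {inv : ℤ → R}
variable {Y : Equiv.Perm (Fin n) → H}

lemma eq_mul_of_adjacent_lt (hY : IsYangBaxterFamily 𝒜 v inv Y) {w : Equiv.Perm (Fin n)}
    {i : ℕ} (h : i + 1 < n) (hw : w ⟨i + 1, h⟩ < w ⟨i, by omega⟩) :
    Y w = Y (w * adj n i) * (𝒜.T (adj n i) - algebraMap R H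
      (((q ^ (v (w ⟨i, by omega⟩) - v (w ⟨i + 1, h⟩)) : Rˣ) : R) *
        inv (v (w ⟨i, by omega⟩) - v (w ⟨i + 1, h⟩)))) := by
  simpa [adj_apply_left h, adj_apply_right h] using
    hY.2 (w * adj n i) i h (by rw [mul_adj_mul_adj, len_mul_adj_of_gt h hw])

theorem unitriangular (hY : IsYangBaxterFamily 𝒜 v inv Y) (w : Equiv.Perm (Fin n)) :
    𝒜.basis.repr (Y w) w = 1 ∧ ∀ u, len w < len u → 𝒜.basis.repr (Y w) u = 0 := by
  by_cases hw : w = 1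
  · subst hw
    rw [hY.1, ← 𝒜.T_one, 𝒜.repr_T]
    refine ⟨Finsupp.single_eq_same, fun u hu => Finsupp.single_eq_of_ne ?_⟩
    rintro rfl
    simp [len_one] at hu
  obtain ⟨i, h, hdesc⟩ := exists_adjacent_lt_of_ne_one hw
  have hlen := len_mul_adj_of_gt h hdesc
  obtain ⟨ih_self, ih_zero⟩ := hY.unitriangular (w * adj n i)
  rw [hY.eq_mul_of_adjacent_lt h hdesc]
  refine ⟨?_, fun u hu => ?_⟩
  · rw [𝒜.repr_mul_T_adj_sub_algebraMap _ _ _ h, ih_self, ih_zero w (by omega)]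
    ring
  · have hu' := len_le_len_mul_adj_add_one u h
    rw [𝒜.repr_mul_T_adj_sub_algebraMap _ _ _ h, ih_zero u (by omega),
      ih_zero (u * adj n i) (by omega)]
    ring
termination_by len w

theorem apply_revPerm_eq_sum (hY : IsYangBaxterFamily 𝒜 v inv Y) {k : ℤ} {a b : R}
    (hv : ∀ (i : ℕ) (h : i + 1 < n), v (Fin.rev ⟨i, by omega⟩) - v (Fin.rev ⟨i + 1, h⟩) = k)
    (ha : ((q ^ k : Rˣ) : R) * inv k = a) (hab : a + b = Qv R q) (hab' : a * b = -1) :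
    Y Fin.revPerm = ∑ w : Equiv.Perm (Fin n),
      (-a) ^ (len (Fin.revPerm : Equiv.Perm (Fin n)) - len w) • 𝒜.T w := by
  have hkill : ∀ (i : ℕ) (h : i + 1 < n),
      Y Fin.revPerm * (𝒜.T (adj n i) - algebraMap R H b) = 0 := by
    intro i h
    rw [hY.eq_mul_of_adjacent_lt h (revPerm_adjacent_lt h)]
    simp only [Fin.revPerm_apply, hv i h, ha]
    rw [mul_assoc, 𝒜.T_adj_sub_mul_T_adj_sub hab hab' h, mul_zero]
  have hcoeff (w : Equiv.Perm (Fin n)) : 𝒜.basis.repr (Y Fin.revPerm) w =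
      (-a) ^ (len (Fin.revPerm : Equiv.Perm (Fin n)) - len w) := by
    rw [apply_eq_pow_mul_apply_revPerm (fun u i h hu =>
      𝒜.repr_mul_adj_of_mul_sub_eq_zero hab h (hkill i h) hu) w, (hY.unitriangular _).1, mul_one]
  conv_lhs => rw [← 𝒜.basis.sum_repr (Y Fin.revPerm)]
  simp only [hcoeff, 𝒜.basis_eq]

end IsYangBaxterFamily

lemma qint_one {R : Type} [CommRing R] (q : Rˣ) : qint q 1 = 1 := by
  norm_num [qint]

lemma qint_neg_one {R : Type} [CommRing R] (q : Rˣ) : qint q (-1) = -1 := by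
  norm_num [qint]

/-- For the maximal permutation `ω` of `S_n`,
`Y_ω^{[1,…,n]} = Σ_w (−q)^{ℓ(ω)−ℓ(w)} T_w` and
`Y_ω^{[n,…,1]} = Σ_w q^{ℓ(w)−ℓ(ω)} T_w`. -/
theorem yangBaxter_maximal {n : ℕ} {R : Type} [CommRing R] {q : Rˣ} {H : Type}
    [Ring H] [Algebra R H] (𝒜 : HeckeAlgebra n R q H)
    (inv : ℤ → R) (hinv : ∀ k : ℤ, k ≠ 0 → qint q k * inv k = 1)
    (Y₁ Y₂ : Equiv.Perm (Fin n) → H)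
    (hY₁ : IsYangBaxterFamily 𝒜 (fun p => (p : ℤ) + 1) inv Y₁)
    (hY₂ : IsYangBaxterFamily 𝒜 (fun p => (n : ℤ) - (p : ℤ)) inv Y₂) :
    Y₁ (Fin.revPerm : Equiv.Perm (Fin n)) =
      ∑ w : Equiv.Perm (Fin n),
        (-(q : R)) ^ (len (Fin.revPerm : Equiv.Perm (Fin n)) - len w) • 𝒜.T w ∧
    Y₂ (Fin.revPerm : Equiv.Perm (Fin n)) =
      ∑ w : Equiv.Perm (Fin n),
        ((q ^ ((len w : ℤ) - (len (Fin.revPerm : Equiv.Perm (Fin n)) : ℤ)) : Rˣ) : R)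
          • 𝒜.T w := by
  have hinv_one : inv 1 = 1 := by simpa [qint_one] using hinv 1 one_ne_zero
  have hinv_neg_one : inv (-1) = -1 :=
    neg_eq_iff_eq_neg.mp (by simpa [qint_neg_one] using hinv (-1) (by norm_num))
  constructor
  · exact hY₁.apply_revPerm_eq_sum (k := 1) (b := -((q⁻¹ : Rˣ) : R))
      (fun i h => by simp; omega) (by simp [hinv_one]) (by simp [Qv, sub_eq_add_neg]) (by simp)
  · rw [hY₂.apply_revPerm_eq_sum (k := -1) (a := -((q⁻¹ : Rˣ) : R)) (b := q)
      (fun i h => by simp; omega) (by simp [hinv_neg_one]) (by simp [Qv, sub_eq_add_neg, add_comm])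
      (by simp)]
    refine sum_congr rfl fun w _ => ?_
    rw [neg_neg, ← Units.val_pow_eq_pow_val, ← zpow_natCast,
      Nat.cast_sub (len_le_len_revPerm w), inv_zpow', neg_sub]

end
end HeckePaper
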